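/- arXiv:2507.09699 — 8 statements merged into one kernel-verified Lean document; each statement's English description precedes it below -/
import Mathlib

section
/- Let ε > 0 and a > 0, and define g(p, a) = p/(p + (1-p)·a) − p for p ∈ [0,1]. Then the function p ↦ g(p, e^{−ε}) on [0,1] attains its maximum at p = 1/(1 + e^{ε/2}), and the maximum value equals (e^{ε/2} − 1)/(e^{ε/2} + 1). -/
open Real

theorem stmt_0 (ε : ℝ) (hε : 0 < ε) :
    (∀ p ∈ Set.Icc (0 : ℝ) 1,
      p / (p + (1 - p) * exp (-ε)) - p ≤
        (1 / (1 + exp (ε / 2))) / (1 / (1 + exp (ε / 2)) +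
          (1 - 1 / (1 + exp (ε / 2))) * exp (-ε)) - 1 / (1 + exp (ε / 2))) ∧
    (1 / (1 + exp (ε / 2))) / (1 / (1 + exp (ε / 2)) +
        (1 - 1 / (1 + exp (ε / 2))) * exp (-ε)) - 1 / (1 + exp (ε / 2)) =
      (exp (ε / 2) - 1) / (exp (ε / 2) + 1) := by
  set s := exp (ε / 2) with hs_def
  have hs1 : 1 < s := by
    rw [hs_def]
    have := Real.exp_lt_exp.mpr (show (0:ℝ) < ε / 2 by linarith)
    simpa using this
  have hs0 : 0 < s := by linarith
  have hs10 : (0:ℝ) < 1 + s := by linarith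
  have hss : (0:ℝ) < s * s := by positivity
  have ha : exp (-ε) = (s * s)⁻¹ := by
    rw [hs_def, ← Real.exp_add, ← Real.exp_neg]
    ring_nf
  have hB : 1 / (1 + s) + (1 - 1 / (1 + s)) * (s * s)⁻¹ = 1 / s := by
    field_simp
    ring
  have hval : (1 / (1 + s)) / (1 / (1 + s) + (1 - 1 / (1 + s)) * exp (-ε)) - 1 / (1 + s) =
      (s - 1) / (s + 1) := by
    rw [ha, hB, one_div s, div_eq_mul_inv, inv_inv, mul_comm, mul_one_div,
      ← sub_div, add_comm 1 s]
  refine ⟨fun p hp => ?_, hval⟩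
  obtain ⟨hp0, hp1⟩ := hp
  rw [hval, ha]
  have hi0 : (0:ℝ) < (s * s)⁻¹ := by positivity
  have hi1 : (s * s)⁻¹ ≤ 1 := by
    rw [inv_le_one_iff₀]
    exact Or.inr (by nlinarith)
  have hd : 0 < p + (1 - p) * (s * s)⁻¹ := by
    nlinarith [mul_le_mul_of_nonneg_left hi1 hp0]
  rw [sub_le_iff_le_add, div_add' _ _ _ (by positivity : (s:ℝ) + 1 ≠ 0),
    div_le_div_iff₀ hd (by linarith : (0:ℝ) < s + 1)]
  have key : p * (1 - p) * (s + 1) ^ 2 ≤ p * (s * s) + 1 - p := by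
    nlinarith [sq_nonneg (p * (s + 1) - 1)]
  have hD : (p + (1 - p) * (s * s)⁻¹) * (s * s) = p * (s * s) + (1 - p) := by
    field_simp
  have h2 : p * (s + 1) * (s * s) ≤ (s - 1 + p * (s + 1)) * (p * (s * s) + (1 - p)) := by
    nlinarith [mul_le_mul_of_nonneg_left key (by linarith : (0:ℝ) ≤ s - 1)]
  refine le_of_mul_le_mul_right ?_ hss
  rw [mul_assoc (s - 1 + p * (s + 1)), hD]
  exact h2
end

section
/- Let ε > 0 and define g(p) = p/(p + (1-p)·e^{ε}) − p for p ∈ [0,1]. Then g attains its minimum on [0,1] at p = 1/(1 + e^{−ε/2}), and the minimum value equals −(e^{ε/2} − 1)/(e^{ε/2} + 1). -/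
/-!
Writing `s = exp (ε / 2)`, the prior `p` has posterior-minus-prior gap
`-(s - 1)/(s + 1) + (s - 1) ((s + 1) p - s)² / ((s + 1) (p + (1 - p) s²))`,
and the second summand is nonnegative for `s ≥ 1` and vanishes exactly at `p = s / (s + 1)`.
-/

open Real

section

variable {s p : ℝ}

lemma convex_comb_sq_pos (hs : s ≠ 0) (hp : p ∈ Set.Icc (0 : ℝ) 1) :
    0 < p + (1 - p) * s ^ 2 := by
  obtain ⟨hp0, hp1⟩ := hp
  rcases hp0.eq_or_lt with rfl | hp0
  · simpa using sq_pos_of_ne_zero hs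
  · have : 0 ≤ (1 - p) * s ^ 2 := mul_nonneg (by linarith) (sq_nonneg s)
    linarith

lemma posterior_sub_prior_eq (hD : p + (1 - p) * s ^ 2 ≠ 0) (hs : s + 1 ≠ 0) :
    p / (p + (1 - p) * s ^ 2) - p =
      -((s - 1) / (s + 1)) +
        (s - 1) * ((s + 1) * p - s) ^ 2 / ((s + 1) * (p + (1 - p) * s ^ 2)) := by
  field_simp
  ring

lemma neg_div_le_posterior_sub_prior (hs : 1 ≤ s) (hp : p ∈ Set.Icc (0 : ℝ) 1) :
    -((s - 1) / (s + 1)) ≤ p / (p + (1 - p) * s ^ 2) - p := by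
  have hD := convex_comb_sq_pos (by linarith) hp
  rw [posterior_sub_prior_eq hD.ne' (by linarith)]
  have : 0 ≤ (s - 1) * ((s + 1) * p - s) ^ 2 / ((s + 1) * (p + (1 - p) * s ^ 2)) :=
    div_nonneg (mul_nonneg (by linarith) (sq_nonneg _)) (mul_pos (by linarith) hD).le
  linarith

lemma posterior_sub_prior_at_div_add_one (hs : 0 < s) :
    s / (s + 1) / (s / (s + 1) + (1 - s / (s + 1)) * s ^ 2) - s / (s + 1) =
      -((s - 1) / (s + 1)) := by
  have : s + 1 ≠ 0 := by positivity
  have hD : s / (s + 1) + (1 - s / (s + 1)) * s ^ 2 = s := by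
    field_simp
    ring
  rw [hD, div_div_cancel_left' hs.ne']
  field_simp
  ring

end

theorem stmt_1 (ε : ℝ) (hε : 0 < ε) :
    (∀ p ∈ Set.Icc (0 : ℝ) 1,
      (1 / (1 + exp (-ε / 2))) / (1 / (1 + exp (-ε / 2)) +
          (1 - 1 / (1 + exp (-ε / 2))) * exp ε) - 1 / (1 + exp (-ε / 2)) ≤
        p / (p + (1 - p) * exp ε) - p) ∧
    (1 / (1 + exp (-ε / 2))) / (1 / (1 + exp (-ε / 2)) +
        (1 - 1 / (1 + exp (-ε / 2))) * exp ε) - 1 / (1 + exp (-ε / 2)) =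
      -((exp (ε / 2) - 1) / (exp (ε / 2) + 1)) := by
  have hexp : exp ε = exp (ε / 2) ^ 2 := by rw [sq, ← exp_add, add_halves]
  have hopt : 1 / (1 + exp (-ε / 2)) = exp (ε / 2) / (exp (ε / 2) + 1) := by
    rw [neg_div, exp_neg]
    field_simp
  have hs : 1 < exp (ε / 2) := one_lt_exp_iff.2 (by linarith)
  rw [hopt, hexp, posterior_sub_prior_at_div_add_one (exp_pos _)]
  exact ⟨fun p hp => neg_div_le_posterior_sub_prior hs.le hp, rfl⟩
end

section
/- Let ε ∈ ℝ, δ > 0, δ' ∈ (δ, 1], and set ε' = log(δ'·e^{ε} + δ) − log(δ' − δ). Then e^{−ε'} = (δ' − δ)/(δ'·e^{ε} + δ), and moreover 1 − δ·(1 + e^{−ε'})/(1 − e^{ε − ε'}) = 1 − δ'. -/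
open Real

theorem stmt_7 (ε δ δ' : ℝ) (hδ : 0 < δ) (hδ' : δ' ∈ Set.Ioc δ 1) :
    exp (-(log (δ' * exp ε + δ) - log (δ' - δ))) = (δ' - δ) / (δ' * exp ε + δ) ∧
    1 - δ * (1 + exp (-(log (δ' * exp ε + δ) - log (δ' - δ)))) /
        (1 - exp (ε - (log (δ' * exp ε + δ) - log (δ' - δ)))) = 1 - δ' := by
  obtain ⟨h1, h2⟩ := hδ'
  have hB : 0 < δ' - δ := by linarith
  have hδ'' : 0 < δ' := hδ.trans h1
  have hA : 0 < δ' * exp ε + δ := by positivity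
  have key : exp (-(log (δ' * exp ε + δ) - log (δ' - δ))) = (δ' - δ) / (δ' * exp ε + δ) := by
    rw [neg_sub, exp_sub, exp_log hA, exp_log hB]
  refine ⟨key, ?_⟩
  have key2 : exp (ε - (log (δ' * exp ε + δ) - log (δ' - δ)))
      = exp ε * ((δ' - δ) / (δ' * exp ε + δ)) := by
    rw [sub_sub_eq_add_sub, exp_sub, exp_add, exp_log hA, exp_log hB]
    ring
  rw [key, key2]
  have hden : 1 - exp ε * ((δ' - δ) / (δ' * exp ε + δ)) = δ * (1 + exp ε) / (δ' * exp ε + δ) := by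
    field_simp
    ring
  rw [hden]
  have hE : 0 < 1 + exp ε := by positivity
  field_simp
  ring
end

section
/- Let ε > 0 with e^{ε/2} < 3, and set ε̃ = log(3·e^{ε/2} − 1) − log(3 − e^{ε/2}). Then for any real z, the inequality (1/2)/((1/2) + (1/2)·e^{−z}) − 1/2 ≤ (e^{ε/2} − 1)/(e^{ε/2} + 1) holds if and only if z ≤ ε̃. -/
open Real

theorem stmt_11 (ε : ℝ) (hε : 0 < ε) (hε3 : exp (ε / 2) < 3) (z : ℝ) :
    ((1 / 2 : ℝ) / (1 / 2 + 1 / 2 * exp (-z)) - 1 / 2 ≤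
      (exp (ε / 2) - 1) / (exp (ε / 2) + 1)) ↔
    z ≤ log (3 * exp (ε / 2) - 1) - log (3 - exp (ε / 2)) := by
  have hA1 : 1 < exp (ε / 2) := by
    rw [show (1:ℝ) = exp 0 by simp]
    exact exp_lt_exp.mpr (by linarith)
  set A := exp (ε / 2) with hAdef
  have h1 : 0 < 3 * A - 1 := by linarith
  have h2 : 0 < 3 - A := by linarith
  have ht : 0 < exp (-z) := exp_pos _
  have hzz : exp z * exp (-z) = 1 := by rw [← exp_add]; simp
  have e1 : (1 / 2 : ℝ) / (1 / 2 + 1 / 2 * exp (-z)) - 1 / 2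
      = (1 - exp (-z)) / (2 * (1 + exp (-z))) := by
    field_simp
    ring
  rw [e1, ← log_div h1.ne' h2.ne', le_log_iff_exp_le (div_pos h1 h2),
    le_div_iff₀ h2, div_le_div_iff₀ (by positivity) (by positivity)]
  constructor <;> intro h <;> nlinarith [exp_pos z, hzz, ht, h1, h2]
end

section
/- Let ε > 0, set ε̃ = log(3·e^{ε/2} − 1) − log(3 − e^{ε/2}) (assuming e^{ε/2} < 3). Then for every p ∈ [1/2, 1], p/(p + (1-p)·e^{−ε̃}) − p ≤ (e^{ε/2} − 1)/(e^{ε/2} + 1). -/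
open Real

theorem stmt_13 (ε : ℝ) (hε : 0 < ε) (hε3 : exp (ε / 2) < 3)
    (p : ℝ) (hp : p ∈ Set.Icc (1 / 2 : ℝ) 1) :
    p / (p + (1 - p) * exp (-(log (3 * exp (ε / 2) - 1) - log (3 - exp (ε / 2))))) - p ≤
      (exp (ε / 2) - 1) / (exp (ε / 2) + 1) := by
  obtain ⟨hp1, hp2⟩ := hp
  set t := exp (ε / 2) with ht
  have ht1 : 1 < t := by
    rw [ht]; have := Real.add_one_lt_exp (by positivity : (ε/2 : ℝ) ≠ 0)
    linarith
  have hA : 0 < 3 * t - 1 := by linarith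
  have hB : 0 < 3 - t := by linarith
  have hexp : exp (-(log (3 * t - 1) - log (3 - t))) = (3 - t) / (3 * t - 1) := by
    rw [neg_sub, Real.exp_sub, Real.exp_log hB, Real.exp_log hA]
  rw [hexp]
  have hD : 0 < p + (1 - p) * ((3 - t) / (3 * t - 1)) := by
    have : 0 ≤ (1 - p) * ((3 - t) / (3 * t - 1)) := by
      apply mul_nonneg (by linarith) (by positivity)
    linarith
  rw [sub_le_iff_le_add, div_le_iff₀ hD, div_add' _ _ _ (by linarith : t + 1 ≠ 0),
    div_mul_eq_mul_div, le_div_iff₀ (by linarith : (0:ℝ) < t + 1)]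
  have key : p + (1 - p) * ((3 - t) / (3 * t - 1)) =
      (p * (3 * t - 1) + (1 - p) * (3 - t)) / (3 * t - 1) := by
    field_simp
  rw [key]
  rw [← mul_div_assoc, le_div_iff₀ hA]
  nlinarith [sq_nonneg (2*p - 1), sq_nonneg (t - 1), mul_pos hA hB,
    mul_nonneg (mul_nonneg (by linarith : (0:ℝ) ≤ 2*p - 1) (by linarith : (0:ℝ) ≤ 1 - p)) (sq_nonneg (t-1)),
    mul_nonneg (sq_nonneg (2*p-1)) (by linarith : (0:ℝ) ≤ t - 1)]
end

section
/- Let ε > 0, set ε̃ = log(3·e^{ε/2} − 1) − log(3 − e^{ε/2}) (assuming e^{ε/2} < 3). Then for every p ∈ [0, 1/2], p/(p + (1-p)·e^{ε̃}) − p ≥ −(e^{ε/2} − 1)/(e^{ε/2} + 1). -/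
/-!
With `t = exp (ε / 2) ∈ (1, 3)` the likelihood ratio is `exp ε̃ = (3t - 1) / (3 - t)`, and the
decrease `p - p / (p + (1 - p) exp ε̃)` reaches exactly `(t - 1) / (t + 1)` at `p = 1/2`. The gap
between the two sides factors as `(t - 1)(1 - 2p)(3t - 1 - 2(t + 1)p)` over a positive
denominator, and for `p ≤ 1/2` each factor is nonnegative.
-/

open Real

lemma posterior_sub_prior_add_eq {t p : ℝ} (h3t : 3 - t ≠ 0) (ht : t + 1 ≠ 0)
    (hN : 3 * t - 1 + p * (4 - 4 * t) ≠ 0) :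
    p / (p + (1 - p) * ((3 * t - 1) / (3 - t))) - p + (t - 1) / (t + 1) =
      (t - 1) * (1 - 2 * p) * (3 * t - 1 - 2 * (t + 1) * p) /
        ((3 * t - 1 + p * (4 - 4 * t)) * (t + 1)) := by
  have hD : p + (1 - p) * ((3 * t - 1) / (3 - t)) = (3 * t - 1 + p * (4 - 4 * t)) / (3 - t) := by
    field_simp
    ring
  rw [hD, div_div_eq_mul_div, div_sub' hN, div_add_div _ _ hN ht,
    div_left_inj' (mul_ne_zero hN ht)]
  ring

theorem neg_le_posterior_sub_prior {t p : ℝ} (ht1 : 1 ≤ t) (ht3 : t < 3)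
    (hp : p ≤ 1 / 2) :
    -((t - 1) / (t + 1)) ≤ p / (p + (1 - p) * ((3 * t - 1) / (3 - t))) - p := by
  have hN : 0 < 3 * t - 1 + p * (4 - 4 * t) := by nlinarith
  rw [← sub_nonneg, sub_neg_eq_add, posterior_sub_prior_add_eq (by linarith) (by linarith) hN.ne']
  have hsecond_root : 0 ≤ 3 * t - 1 - 2 * (t + 1) * p := by nlinarith
  have hfirst_roots : 0 ≤ (t - 1) * (1 - 2 * p) := mul_nonneg (by linarith) (by linarith)
  exact div_nonneg (mul_nonneg hfirst_roots hsecond_root) (mul_nonneg hN.le (by linarith))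

theorem stmt_14 (ε : ℝ) (hε : 0 < ε) (hε3 : exp (ε / 2) < 3)
    (p : ℝ) (hp : p ∈ Set.Icc (0 : ℝ) (1 / 2)) :
    -((exp (ε / 2) - 1) / (exp (ε / 2) + 1)) ≤
      p / (p + (1 - p) * exp (log (3 * exp (ε / 2) - 1) - log (3 - exp (ε / 2)))) - p := by
  have ht1 : 1 < exp (ε / 2) := one_lt_exp_iff.mpr (by positivity)
  rw [exp_sub, exp_log (by linarith), exp_log (by linarith)]
  exact neg_le_posterior_sub_prior ht1.le hε3 hp.2
end

section
/- Let ρ > 0 and 0 < δ < 1, and set ε = ρ + 2·√(ρ·log(1/δ)). Then for every α > 1, α·ρ + log(1/δ)/(α − 1) ≥ ε, with equality when α = 1 + √(log(1/δ)/ρ). -/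
/-!
With `L = log (1 / δ) ≥ 0` and `t = α - 1 > 0` the tradeoff is `ρ + (t ρ + L / t)`, and AM-GM bounds `t ρ + L / t` below by
`2 √(ρ L)`, with equality exactly when `t ρ = L / t`, i.e. `t = √(L / ρ)`.
-/

open Real

theorem two_mul_sqrt_mul_le_add {x y : ℝ} (hx : 0 ≤ x) (hy : 0 ≤ y) : 2 * √(x * y) ≤ x + y :=
  calc 2 * √(x * y) = 2 * √x * √y := by rw [sqrt_mul hx, mul_assoc]
    _ ≤ √x ^ 2 + √y ^ 2 := two_mul_le_add_sq _ _
    _ = x + y := by rw [sq_sqrt hx, sq_sqrt hy]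

theorem add_two_mul_sqrt_mul_le {ρ L α : ℝ} (hρ : 0 ≤ ρ) (hL : 0 ≤ L) (hα : 1 < α) :
    ρ + 2 * √(ρ * L) ≤ α * ρ + L / (α - 1) := by
  have ht : 0 < α - 1 := sub_pos.mpr hα
  have hprod : (α - 1) * ρ * (L / (α - 1)) = ρ * L := by field_simp
  calc ρ + 2 * √(ρ * L) = ρ + 2 * √((α - 1) * ρ * (L / (α - 1))) := by rw [hprod]
    _ ≤ ρ + ((α - 1) * ρ + L / (α - 1)) := by
      gcongr
      exact two_mul_sqrt_mul_le_add (by positivity) (by positivity)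
    _ = α * ρ + L / (α - 1) := by ring

theorem mul_add_div_sqrt_div_eq {ρ L : ℝ} (hρ : 0 < ρ) (hL : 0 ≤ L) :
    (1 + √(L / ρ)) * ρ + L / ((1 + √(L / ρ)) - 1) = ρ + 2 * √(ρ * L) := by
  have hsqrt_mul : √(L / ρ) * ρ = √(ρ * L) :=
    calc √(L / ρ) * ρ = √(L / ρ) * √(ρ ^ 2) := by rw [sqrt_sq hρ.le]
      _ = √(L / ρ * ρ ^ 2) := (sqrt_mul (div_nonneg hL hρ.le) _).symm
      _ = √(ρ * L) := by congr 1; field_simp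
  have hdiv_sqrt : L / √(L / ρ) = √(ρ * L) :=
    calc L / √(L / ρ) = ρ * (L / ρ / √(L / ρ)) := by rw [mul_div_assoc', mul_div_cancel₀ _ hρ.ne']
      _ = √(ρ * L) := by rw [div_sqrt, mul_comm, hsqrt_mul]
  rw [add_sub_cancel_left, hdiv_sqrt, add_mul, one_mul, hsqrt_mul]
  ring

theorem stmt_18 (ρ δ : ℝ) (hρ : 0 < ρ) (hδ : 0 < δ) (hδ1 : δ < 1) :
    (∀ α : ℝ, 1 < α →
      ρ + 2 * Real.sqrt (ρ * log (1 / δ)) ≤ α * ρ + log (1 / δ) / (α - 1)) ∧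
    (1 + Real.sqrt (log (1 / δ) / ρ)) * ρ +
        log (1 / δ) / ((1 + Real.sqrt (log (1 / δ) / ρ)) - 1) =
      ρ + 2 * Real.sqrt (ρ * log (1 / δ)) := by
  have hL : 0 ≤ log (1 / δ) := log_nonneg ((one_le_div hδ).mpr hδ1.le)
  exact ⟨fun α hα => add_two_mul_sqrt_mul_le hρ.le hL hα, mul_add_div_sqrt_div_eq hρ hL⟩
end

section
/- Let ε ≥ 0, δ ∈ [0,1], and p ∈ (0,1]. If a real number x satisfies p/(p + (1-p)·e^{ε}) ≤ x ≤ p/(p + (1-p)·e^{−ε}), then e^{−ε} ≤ x/p ≤ e^{ε} and |x − p| ≤ (e^{ε/2} − 1)/(e^{ε/2} + 1). -/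
open Real

theorem stmt_19 (ε δ p x : ℝ) (hε : 0 ≤ ε) (hδ : δ ∈ Set.Icc (0 : ℝ) 1)
    (hp : p ∈ Set.Ioc (0 : ℝ) 1)
    (hx : p / (p + (1 - p) * exp ε) ≤ x ∧ x ≤ p / (p + (1 - p) * exp (-ε))) :
    (exp (-ε) ≤ x / p ∧ x / p ≤ exp ε) ∧
    |x - p| ≤ (exp (ε / 2) - 1) / (exp (ε / 2) + 1) := by
  obtain ⟨hp0, hp1⟩ := hp
  obtain ⟨hx1, hx2⟩ := hx
  set t := exp (ε / 2) with hts
  set u := exp (-(ε / 2)) with hus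
  have ht1 : 1 ≤ t := one_le_exp (by linarith)
  have ht0 : 0 < t := exp_pos _
  have hu0 : 0 < u := exp_pos _
  have hu1 : u ≤ 1 := exp_le_one_iff.mpr (by linarith)
  have hut : u * t = 1 := by rw [hts, hus, ← exp_add]; simp
  have h3 : u * u * (t * t) = 1 := by
    rw [show u * u * (t * t) = (u * t) * (u * t) by ring, hut]; norm_num
  have hE : exp ε = t * t := by rw [hts, ← exp_add]; ring_nf
  have hE' : exp (-ε) = u * u := by rw [hus, ← exp_add]; ring_nf
  clear_value t u
  have hD1 : 0 < p + (1 - p) * exp ε := by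
    have : 0 ≤ (1 - p) * exp ε := mul_nonneg (by linarith) (exp_pos _).le
    linarith
  have hD2 : 0 < p + (1 - p) * exp (-ε) := by
    have : 0 ≤ (1 - p) * exp (-ε) := mul_nonneg (by linarith) (exp_pos _).le
    linarith
  have h1 : p ≤ x * (p + (1 - p) * exp ε) := by
    rw [div_le_iff₀ hD1] at hx1; linarith
  have h2 : x * (p + (1 - p) * exp (-ε)) ≤ p := by
    rw [le_div_iff₀ hD2] at hx2; linarith
  rw [hE] at h1 hD1
  rw [hE'] at h2 hD2
  -- multiply h2 by t^2 to clear u's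
  have h2' : x * (p * (t * t) + (1 - p)) ≤ p * (t * t) := by
    have := mul_le_mul_of_nonneg_right h2 (mul_nonneg ht0.le ht0.le)
    have heq : x * (p + (1 - p) * (u * u)) * (t * t)
        = x * (p * (t * t) + (1 - p)) := by linear_combination x * (1 - p) * h3
    linarith [heq ▸ this]
  have hid1 : u * u * p * (p + (1 - p) * (t * t)) = u * u * p * p + p * (1 - p) := by
    linear_combination p * (1 - p) * h3
  have hid2 : t * t * p * (p + (1 - p) * (u * u)) = t * t * p * p + p * (1 - p) := by
    linear_combination p * (1 - p) * h3
  have hu2 : u * u ≤ 1 := by nlinarith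
  have ht2 : 1 ≤ t * t := by nlinarith
  have htp : 0 < t + 1 := by linarith
  have hxlo : u * u * p ≤ x := by nlinarith [hD1, h1, hid1, sq_nonneg p]
  have hxhi : x ≤ t * t * p := by nlinarith [hD2, h2, hid2, sq_nonneg p]
  refine ⟨⟨?_, ?_⟩, ?_⟩
  · rw [le_div_iff₀ hp0, hE']; linarith
  · rw [div_le_iff₀ hp0, hE]; linarith
  · rw [abs_le]
    constructor
    · have hA : 0 ≤ (t - 1) * ((t + 1) * p - t) ^ 2
          + (t + 1) * (x * (p + (1 - p) * (t * t)) - p) :=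
        add_nonneg (mul_nonneg (by linarith) (sq_nonneg _))
          (mul_nonneg htp.le (by linarith))
      have hid : (p + (1 - p) * (t * t)) * ((t - 1) - (p - x) * (t + 1))
          = (t - 1) * ((t + 1) * p - t) ^ 2
            + (t + 1) * (x * (p + (1 - p) * (t * t)) - p) := by ring
      have h5 : 0 ≤ (p + (1 - p) * (t * t)) * ((t - 1) - (p - x) * (t + 1)) := by
        rw [hid]; exact hA
      have h4 : 0 ≤ (t - 1) - (p - x) * (t + 1) :=
        le_of_mul_le_mul_left (by simpa using h5) hD1
      have hkey : (p - x) * (t + 1) ≤ t - 1 := by linarith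
      have := (le_div_iff₀ htp).mpr hkey
      linarith
    · have hE2 : 0 < p * (t * t) + (1 - p) :=
        add_pos_of_pos_of_nonneg (mul_pos hp0 (mul_pos ht0 ht0)) (by linarith)
      have hA : 0 ≤ (t - 1) * ((t + 1) * (1 - p) - t) ^ 2
          + (t + 1) * (p * (t * t) - x * (p * (t * t) + (1 - p))) :=
        add_nonneg (mul_nonneg (by linarith) (sq_nonneg _))
          (mul_nonneg htp.le (by linarith))
      have hid : (p * (t * t) + (1 - p)) * ((t - 1) - (x - p) * (t + 1))
          = (t - 1) * ((t + 1) * (1 - p) - t) ^ 2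
            + (t + 1) * (p * (t * t) - x * (p * (t * t) + (1 - p))) := by ring
      have h5 : 0 ≤ (p * (t * t) + (1 - p)) * ((t - 1) - (x - p) * (t + 1)) := by
        rw [hid]; exact hA
      have h4 : 0 ≤ (t - 1) - (x - p) * (t + 1) :=
        le_of_mul_le_mul_left (by simpa using h5) hE2
      have hkey : (x - p) * (t + 1) ≤ t - 1 := by linarith
      have := (le_div_iff₀ htp).mpr hkey
      linarith
end
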